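/- Let M be a map and let E0 be an interface edge of M. Then no extremity of E0 is a leaf, and M \ E0 has the same numbers of vertices and connected components as M, one fewer face, and one fewer edge; consequently d(M \ E0) = d(M). -/

import Mathlib

open Equiv Polynomial

open scoped Classical

noncomputable section

variable {α : Type*}

/-- `f` is a *pairing* of the finite set `S`: an involution of the ambient type which
moves exactly the elements of `S` (i.e., a fixpoint-free involution of `S`, extended by
the identity outside of `S`); the pairs of the pairing are the orbits `{a, f a}`. -/
def IsPairing (S : Finset α) (f : Equiv.Perm α) : Prop :=
  (∀ a, f (f a) = a) ∧ ∀ a, f a ≠ a ↔ a ∈ S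

/-- The pairing `P_{{s₁,s₂}}` obtained from the pairing `f` by removing the elements
`s₁, s₂` : if `{s₁,s₂}` is a pair of `f` it is simply deleted; otherwise the pairs
containing `s₁` and `s₂` are deleted and the partners `f s₁`, `f s₂` are matched
together. -/
def removeP (f : Equiv.Perm α) (s₁ s₂ : α) : Equiv.Perm α :=
  Equiv.swap s₁ s₂ * Equiv.swap s₁ (f s₂) * Equiv.swap s₂ (f s₁) * f

/-- `t` lies in the polygon of `L(b,w)` containing `s`, in *even position* with
respect to `s`: `t` is obtained from `s` by an odd alternating word in the
involutions `b` and `w`. -/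
def EvenPos (b w : Equiv.Perm α) (s t : α) : Prop :=
  ∃ j : ℤ, t = ((w * b) ^ j * b) s

/-- `t` lies in the polygon of `L(b,w)` containing `s`, in *odd position* with respect
to `s`: `t` is obtained from `s` by an even alternating word in the involutions
`b` and `w`. -/
def OddPos (b w : Equiv.Perm α) (s t : α) : Prop :=
  ∃ j : ℤ, t = ((w * b) ^ j) s

/-- `s` and `t` lie in the same polygon of `L(b,w)`. -/
def SameFace (b w : Equiv.Perm α) (s t : α) : Prop :=
  EvenPos b w s t ∨ OddPos b w s t

/-- The edge `{s,t}` is *straight*: both edge-sides lie in the same face,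
in even position. -/
def IsStraight (b w : Equiv.Perm α) (s t : α) : Prop :=
  SameFace b w s t ∧ EvenPos b w s t

/-- The edge `{s,t}` is *twisted*: both edge-sides lie in the same face,
in odd position. -/
def IsTwisted (b w : Equiv.Perm α) (s t : α) : Prop :=
  SameFace b w s t ∧ OddPos b w s t

/-- The edge `{s,t}` is an *interface* edge: its edge-sides lie in two
different faces. -/
def IsInterface (b w : Equiv.Perm α) (s t : α) : Prop :=
  ¬ SameFace b w s t

/-- The polygon (face) of `L(b,w)` containing `s`, as the set of its edge-sides. -/
def faceOf (S : Finset α) (b w : Equiv.Perm α) (s : α) : Finset α :=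
  S.filter (SameFace b w s)

/-- The collection of polygons (faces) of `L(b,w)`. -/
def faces (S : Finset α) (b w : Equiv.Perm α) : Finset (Finset α) :=
  S.image (faceOf S b w)

/-- The number of polygons (faces) of `L(b,w)`. -/
def numFaces (S : Finset α) (b w : Equiv.Perm α) : ℕ :=
  (faces S b w).card

/-- The *type* of the couple of pairings `(b,w)`: the multiset of half-lengths of the
polygons of `L(b,w)`. -/
def faceType (S : Finset α) (b w : Equiv.Perm α) : Multiset ℕ :=
  (faces S b w).val.map fun F => F.card / 2

/-- `s` and `t` lie in the same connected component of the map `(b,w,e)`: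
`t` is obtained from `s` by applying partner maps in `b`, `w`, `e` repeatedly. -/
def SameComponent (b w e : Equiv.Perm α) (s t : α) : Prop :=
  ∃ g ∈ Subgroup.closure ({b, w, e} : Set (Equiv.Perm α)), g s = t

/-- The number of connected components of the map `(S, b, w, e)`. -/
def numComponents (S : Finset α) (b w e : Equiv.Perm α) : ℕ :=
  (S.image fun s => S.filter (SameComponent b w e s)).card

/-- The number of vertices of the map `(S, b, w, e)`: black vertices are the polygons
of `L(b,e)`, white vertices are the polygons of `L(w,e)`. -/
def numVertices (S : Finset α) (b w e : Equiv.Perm α) : ℕ :=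
  numFaces S b e + numFaces S w e

/-- The number of edges of a map with edge-side set `S`. -/
def numEdges (S : Finset α) : ℕ := S.card / 2

/-- The Euler characteristic `χ(M) = |V(M)| - |E(M)| + |F(M)|` of the map
`M = (S, b, w, e)`. -/
def eulerChar (S : Finset α) (b w e : Equiv.Perm α) : ℤ :=
  (numVertices S b w e : ℤ) - (numEdges S : ℤ) + (numFaces S b w : ℤ)

/-- The quantity `d(M) = 2·(number of connected components of M) - χ(M)`. -/
def dInv (S : Finset α) (b w e : Equiv.Perm α) : ℤ :=
  2 * (numComponents S b w e : ℤ) - eulerChar S b w e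

/-- The edge `{s, e s}` of the map `(b, w, e)` is a *bridge*: either one of its
extremities is a leaf (the pair belongs to `b` or to `w` as well), or its two
extremities lie in different connected components of the map with this edge removed. -/
def IsBridge (b w e : Equiv.Perm α) (s : α) : Prop :=
  (b s = e s ∨ w s = e s) ∨
    ¬ SameComponent (removeP b s (e s)) (removeP w s (e s)) (removeP e s (e s))
        (b s) (w s)

/-- The weight of the edge `{s,t}` in the map with face structure given by `(b,w)`,
as a polynomial in the variable `γ` (over `ℚ`): `1` for a straight edge, `γ` for a
twisted edge, `1/2` for an interface edge. -/
def edgeWeight (b w : Equiv.Perm α) (s t : α) : Polynomial ℚ :=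
  if IsStraight b w s t then 1
  else if IsTwisted b w s t then Polynomial.X
  else Polynomial.C (1 / 2)

/-- The weight `w_{M,≺}` of a map `(b,w,e)` equipped with a history, the latter
encoded as the list of the edges in increasing order (each edge represented by one
of its edge-sides): the product of the weights of the edges, each weight being
computed in the map in which all previous edges have already been removed. -/
def histWeight : Equiv.Perm α → Equiv.Perm α → Equiv.Perm α → List α → Polynomial ℚ
  | _, _, _, [] => 1
  | b, w, e, s :: L =>
      edgeWeight b w s (e s) *
        histWeight (removeP b s (e s)) (removeP w s (e s)) (removeP e s (e s)) L

/-- `L` encodes a *history* (a linear order on the edges) of the map with edge-side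
set `S` and edge pairing `e`: it lists every edge exactly once, each edge being
represented by its smaller edge-side. -/
def IsHistory [LinearOrder α] (S : Finset α) (e : Equiv.Perm α) (L : List α) : Prop :=
  L.Nodup ∧ (∀ s ∈ L, s ∈ S ∧ s < e s) ∧ ∀ a ∈ S, a ∈ L ∨ e a ∈ L

/-- The *measure of non-orientability* `w_M` of the map `(S,b,w,e)`: the average of
`w_{M,≺}` over all `n!` histories `≺`, as a polynomial in the variable `γ` over `ℚ`. -/
def mapWeight [LinearOrder α] (S : Finset α) (b w e : Equiv.Perm α) : Polynomial ℚ :=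
  Polynomial.C (1 / ((numEdges S).factorial : ℚ)) *
    ∑ F ∈ (Fintype.piFinset fun _ : Fin (numEdges S) => S).filter
        (fun F => IsHistory S e (List.ofFn F)),
      histWeight b w e (List.ofFn F)

/-- The number of embeddings `N_M(λ)` of the underlying bipartite graph of the map
`(S,b,w,e)` into the Young diagram whose list of row lengths is `lam`: an embedding
maps black vertices (polygons of `L(b,e)`) to rows, white vertices (polygons of
`L(w,e)`) to columns, and each edge to the box at the corresponding intersection;
it is encoded by a pair of functions on edge-sides that are constant on vertices. -/
def NMap (lam : List ℕ) (S : Finset α) (b w e : Equiv.Perm α) : ℕ :=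
  Nat.card {fp : (α → ℕ) × (α → ℕ) //
    (∀ s, s ∉ S → fp.1 s = 0 ∧ fp.2 s = 0) ∧
    (∀ s ∈ S, fp.1 (b s) = fp.1 s ∧ fp.1 (e s) = fp.1 s) ∧
    (∀ s ∈ S, fp.2 (w s) = fp.2 s ∧ fp.2 (e s) = fp.2 s) ∧
    ∀ s ∈ S, fp.2 s < lam.getD (fp.1 s) 0}

/-- The orientability generating series `\widehat{Ch}^{(α)}_π(λ)`, where the face-type
`π` is realized by the fixed couple of pairings `(b,w)` of `S`, `lam` is the list of
row lengths of the Young diagram `λ`, and `a` is the Jack parameter `α`: the sum over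
all pairings `e` of `S` (i.e., over all maps of face-type `π`) of
`(-1/√α)^{|V_•(M)|} (√α)^{|V_∘(M)|} w_M N_M(λ)`, times the sign `(-1)^{ℓ(π)}`,
where `w_M` is evaluated at `γ = (1-α)/√α`. -/
def genSeries [Fintype α] [LinearOrder α] (lam : List ℕ) (S : Finset α)
    (b w : Equiv.Perm α) (a : ℝ) : ℝ :=
  (-1 : ℝ) ^ numFaces S b w *
    ∑ e ∈ Finset.univ.filter fun e : Equiv.Perm α => IsPairing S e,
      (-1 / Real.sqrt a) ^ numFaces S b e * (Real.sqrt a) ^ numFaces S w e *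
        Polynomial.aeval ((1 - a) / Real.sqrt a) (mapWeight S b w e) *
          (NMap lam S b w e : ℝ)

/-- The number of embeddings `N_G(λ)` of the bipartite graph `G` with black vertex set
`ι`, white vertex set `κ` and edge relation `Edg` into the Young diagram whose list of
row lengths is `lam`: black vertices are mapped to rows of `λ`, white vertices to
columns of `λ`, and every edge to the box at the corresponding intersection, which
must belong to `λ`. -/
def NGraph {ι κ : Type*} (lam : List ℕ) (Edg : ι → κ → Prop) : ℕ :=
  Nat.card {fp : (ι → ℕ) × (κ → ℕ) //
    (∀ u, 0 < lam.getD (fp.1 u) 0) ∧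
    (∀ v, ∃ i, fp.2 v < lam.getD i 0) ∧
    ∀ u v, Edg u v → fp.2 v < lam.getD (fp.1 u) 0}


/-!
Removing the edge `{s, t}` (with `t = e s`) fixes `s` and `t` and reconnects their partners:
`removeP g s t` sends `g s ↦ g t` and `g t ↦ g s`. Hence every step of the new map is a path of
the old one; conversely, an old path avoiding `s, t` at its ends is transported to the new map by
replacing `s, t` with `b s, b t`, as soon as `b s, w s` (and `b t, w t`) stay connected there.

For an interface edge, `b s` and `w s` stay connected by a parity argument: the points of the face
of `s` reachable from `b s` in the new map are closed under `w` unless `w s` is among them, and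
closed under `b` once `b s` is removed, so two fixed-point-free involutions would live on sets
whose sizes differ by one. The faces of `s` and `t` thus merge into a single face.
-/

open Relation

theorem Subgroup.mem_closure_pair_iff_of_mul_self_eq_one {G : Type*} [Group G] {b w g : G}
    (hb : b * b = 1) (hw : w * w = 1) :
    g ∈ Subgroup.closure {b, w} ↔ ∃ j : ℤ, g = (w * b) ^ j * b ∨ g = (w * b) ^ j := by
  have hb' : b⁻¹ = b := inv_eq_of_mul_eq_one_right hb
  have hw' : w⁻¹ = w := inv_eq_of_mul_eq_one_right hw
  have hconj (k : ℤ) : b * (w * b) ^ k = (w * b) ^ (-k) * b := by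
    rw [zpow_neg, ← inv_zpow, mul_inv_rev, hb', hw']
    exact SemiconjBy.zpow_right (by simp only [SemiconjBy, mul_assoc]) k
  constructor
  · intro hg
    induction hg using Subgroup.closure_induction with
    | mem x hx =>
      rcases hx with rfl | rfl
      · exact ⟨0, Or.inl (by simp)⟩
      · exact ⟨1, Or.inl (by rw [zpow_one, mul_assoc, hb, mul_one])⟩
    | one => exact ⟨0, Or.inr (by simp)⟩
    | mul x y _ _ hx hy =>
      obtain ⟨j, rfl | rfl⟩ := hx <;> obtain ⟨k, rfl | rfl⟩ := hy
      · refine ⟨j - k, Or.inr ?_⟩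
        rw [mul_assoc, ← mul_assoc b, hconj, mul_assoc, hb, mul_one, ← zpow_add, sub_eq_add_neg]
      · refine ⟨j - k, Or.inl ?_⟩
        rw [mul_assoc, hconj, ← mul_assoc, ← zpow_add, sub_eq_add_neg]
      · exact ⟨j + k, Or.inl (by rw [← mul_assoc, ← zpow_add])⟩
      · exact ⟨j + k, Or.inr (by rw [← zpow_add])⟩
    | inv x _ hx =>
      obtain ⟨j, rfl | rfl⟩ := hx
      · exact ⟨j, Or.inl (by rw [mul_inv_rev, hb', ← zpow_neg, hconj, neg_neg])⟩
      · exact ⟨-j, Or.inr (by rw [zpow_neg])⟩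
  · have hbm : b ∈ Subgroup.closure {b, w} := Subgroup.subset_closure (by simp)
    have hwm : w ∈ Subgroup.closure {b, w} := Subgroup.subset_closure (by simp)
    rintro ⟨j, rfl | rfl⟩
    · exact mul_mem (zpow_mem (mul_mem hwm hbm) j) hbm
    · exact zpow_mem (mul_mem hwm hbm) j

variable {S : Finset α} {b w e f : Perm α} {s t : α}

section Reachability

def Step (T : Set (Perm α)) (x y : α) : Prop := ∃ g ∈ T, g x = y

theorem Step.mono {T U : Set (Perm α)} (hTU : T ⊆ U) : Step T ≤ Step U :=
  fun _ _ ⟨g, hg, hgxy⟩ => ⟨g, hTU hg, hgxy⟩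

theorem equivalence_reflTransGen_step {T : Set (Perm α)}
    (hT : ∀ g ∈ T, Function.Involutive g) : Equivalence (ReflTransGen (Step T)) where
  refl _ := .refl
  symm h := by
    induction h with
    | refl => rfl
    | tail _ hstep ih =>
      obtain ⟨g, hg, rfl⟩ := hstep
      exact ih.head ⟨g, hg, hT g hg _⟩
  trans := .trans

theorem exists_mem_closure_apply_eq_iff_reflTransGen {T : Set (Perm α)}
    (hT : ∀ g ∈ T, Function.Involutive g) {x y : α} :
    (∃ g ∈ Subgroup.closure T, g x = y) ↔ ReflTransGen (Step T) x y := by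
  constructor
  · rintro ⟨g, hg, rfl⟩
    induction hg using Subgroup.closure_induction generalizing x with
    | mem g hg => exact .single ⟨g, hg, rfl⟩
    | one => exact .refl
    | mul g h _ _ hg hh => exact (hh (x := x)).trans hg
    | inv g _ hg =>
      simpa using (equivalence_reflTransGen_step hT).symm (hg (x := g⁻¹ x))
  · intro h
    induction h with
    | refl => exact ⟨1, one_mem _, rfl⟩
    | tail _ hstep ih =>
      obtain ⟨g, hg, rfl⟩ := ih
      obtain ⟨g', hg', rfl⟩ := hstep
      exact ⟨g' * g, mul_mem (Subgroup.subset_closure hg') hg, rfl⟩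

theorem sameFace_iff_reflTransGen (hb : Function.Involutive b) (hw : Function.Involutive w)
    {x y : α} : SameFace b w x y ↔ ReflTransGen (Step {b, w}) x y := by
  rw [← exists_mem_closure_apply_eq_iff_reflTransGen (by simpa using ⟨hb, hw⟩)]
  simp only [Subgroup.mem_closure_pair_iff_of_mul_self_eq_one (Equiv.ext hb) (Equiv.ext hw)]
  constructor
  · rintro (⟨j, rfl⟩ | ⟨j, rfl⟩)
    exacts [⟨_, ⟨j, Or.inl rfl⟩, rfl⟩, ⟨_, ⟨j, Or.inr rfl⟩, rfl⟩]
  · rintro ⟨g, ⟨j, rfl | rfl⟩, rfl⟩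
    exacts [Or.inl ⟨j, rfl⟩, Or.inr ⟨j, rfl⟩]

theorem sameComponent_iff_reflTransGen (hb : Function.Involutive b)
    (hw : Function.Involutive w) (he : Function.Involutive e) {x y : α} :
    SameComponent b w e x y ↔ ReflTransGen (Step {b, w, e}) x y :=
  exists_mem_closure_apply_eq_iff_reflTransGen (by simpa using ⟨hb, hw, he⟩)

end Reachability

section Classes

variable {R : α → α → Prop}

def numClasses (S : Finset α) (R : α → α → Prop) : ℕ :=
  (S.image fun x => S.filter (R x)).card

theorem numClasses_congr {R' : α → α → Prop} (h : ∀ x ∈ S, ∀ y ∈ S, R x y ↔ R' x y) :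
    numClasses S R = numClasses S R' :=
  congrArg Finset.card <| Finset.image_congr fun x hx => Finset.filter_congr (h x hx)

theorem numClasses_eq_card_image_mk (hR : Equivalence R) :
    numClasses S R = (S.image (Quotient.mk ⟨R, hR⟩)).card := by
  let cls : Quotient ⟨R, hR⟩ → Finset α :=
    Quotient.lift (fun x => S.filter (R x)) fun x y hxy =>
      Finset.filter_congr fun z _ => ⟨hR.trans (hR.symm hxy), hR.trans hxy⟩
  have hcls : (S.image fun x => S.filter (R x)) = (S.image (Quotient.mk _)).image cls := by
    rw [Finset.image_image]; rfl
  rw [numClasses, hcls, Finset.card_image_of_injOn]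
  simp only [Set.InjOn, Finset.coe_image, Set.mem_image, Finset.mem_coe]
  rintro _ ⟨x, hx, rfl⟩ _ ⟨y, -, rfl⟩ hxy
  have hxy' : S.filter (R x) = S.filter (R y) := hxy
  have hmem : x ∈ S.filter (R y) := hxy' ▸ Finset.mem_filter.2 ⟨hx, hR.refl x⟩
  exact Quotient.sound (hR.symm (Finset.mem_filter.1 hmem).2)

theorem numClasses_sdiff (hR : Equivalence R) {U : Finset α}
    (h : ∀ x ∈ S ∩ U, ∃ y ∈ S \ U, R x y) : numClasses (S \ U) R = numClasses S R := by
  rw [numClasses_eq_card_image_mk hR, numClasses_eq_card_image_mk hR]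
  congr 1
  refine subset_antisymm (Finset.image_subset_image Finset.sdiff_subset) ?_
  intro q hq
  obtain ⟨x, hx, rfl⟩ := Finset.mem_image.1 hq
  by_cases hxU : x ∈ U
  · obtain ⟨y, hy, hxy⟩ := h x (Finset.mem_inter.2 ⟨hx, hxU⟩)
    exact Finset.mem_image.2 ⟨y, hy, Quotient.sound (hR.symm hxy)⟩
  · exact Finset.mem_image_of_mem _ (Finset.mem_sdiff.2 ⟨hx, hxU⟩)

/-- For an equivalence `R`, the equivalence generated by `R` and `s ~ t`. -/
def mergeRel (R : α → α → Prop) (s t x y : α) : Prop :=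
  R x y ∨ (R x s ∧ R t y) ∨ (R x t ∧ R s y)

theorem Equivalence.mergeRel (hR : Equivalence R) (s t : α) : Equivalence (mergeRel R s t) where
  refl x := Or.inl (hR.refl x)
  symm := by
    rintro x y (h | ⟨h₁, h₂⟩ | ⟨h₁, h₂⟩)
    exacts [Or.inl (hR.symm h), Or.inr (Or.inr ⟨hR.symm h₂, hR.symm h₁⟩),
      Or.inr (Or.inl ⟨hR.symm h₂, hR.symm h₁⟩)]
  trans := by
    have tr : ∀ a b c, R a b → R b c → R a c := fun _ _ _ => hR.trans
    have sy : ∀ a b, R a b → R b a := fun _ _ => hR.symm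
    unfold _root_.mergeRel
    grind

theorem numClasses_mergeRel_add_one (hR : Equivalence R) (hs : s ∈ S) (ht : t ∈ S)
    (hst : ¬ R s t) : numClasses S (mergeRel R s t) + 1 = numClasses S R := by
  let r : Setoid α := ⟨R, hR⟩
  let q : Setoid α := ⟨mergeRel R s t, hR.mergeRel s t⟩
  let φ : Quotient r → Quotient q := Quotient.map' id fun _ _ h => Or.inl h
  set A := S.image (Quotient.mk r)
  have hsA : Quotient.mk r s ∈ A.erase (Quotient.mk r t) :=
    Finset.mem_erase.2 ⟨fun h => hst (Quotient.exact h), Finset.mem_image_of_mem _ hs⟩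
  have hφst : φ (Quotient.mk r t) = φ (Quotient.mk r s) :=
    Quotient.sound (Or.inr (Or.inr ⟨hR.refl t, hR.refl s⟩))
  have himage : S.image (Quotient.mk q) = (A.erase (Quotient.mk r t)).image φ := by
    refine subset_antisymm ?_ ?_
    · intro c hc
      obtain ⟨x, hx, rfl⟩ := Finset.mem_image.1 hc
      by_cases hxt : Quotient.mk r x = Quotient.mk r t
      · exact Finset.mem_image.2 ⟨_, hsA, by rw [← hφst, ← hxt]; rfl⟩
      · exact Finset.mem_image.2 ⟨_, Finset.mem_erase.2 ⟨hxt, Finset.mem_image_of_mem _ hx⟩, rfl⟩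
    · exact (Finset.image_subset_image (Finset.erase_subset _ _)).trans
        (by rw [Finset.image_image]; rfl)
  have hinj : Set.InjOn φ (A.erase (Quotient.mk r t)) := by
    have hrep : ∀ c ∈ A.erase (Quotient.mk r t), ∃ x, c = Quotient.mk r x ∧ ¬ R x t := by
      intro c hc
      obtain ⟨hct, hcA⟩ := Finset.mem_erase.1 hc
      obtain ⟨x, -, rfl⟩ := Finset.mem_image.1 hcA
      exact ⟨x, rfl, fun h => hct (Quotient.sound h)⟩
    intro c hc c' hc' hφ
    obtain ⟨x, rfl, hxt⟩ := hrep c hc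
    obtain ⟨y, rfl, hyt⟩ := hrep c' hc'
    rcases (Quotient.exact hφ : mergeRel R s t x y) with hxy | ⟨-, hty⟩ | ⟨hxt', -⟩
    · exact Quotient.sound hxy
    · exact absurd (hR.symm hty) hyt
    · exact absurd hxt' hxt
  rw [numClasses_eq_card_image_mk hR, numClasses_eq_card_image_mk (hR.mergeRel s t), himage,
    Finset.card_image_of_injOn hinj, Finset.card_erase_add_one (Finset.mem_image_of_mem _ ht)]

end Classes

theorem numFaces_eq_numClasses (hb : Function.Involutive b) (hw : Function.Involutive w) :
    numFaces S b w = numClasses S (ReflTransGen (Step {b, w})) := by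
  unfold numFaces faces faceOf numClasses
  simp only [funext₂ fun x y => propext (sameFace_iff_reflTransGen hb hw (x := x) (y := y))]

theorem numComponents_eq_numClasses (hb : Function.Involutive b) (hw : Function.Involutive w)
    (he : Function.Involutive e) :
    numComponents S b w e = numClasses S (ReflTransGen (Step {b, w, e})) := by
  unfold numComponents numClasses
  simp only [funext₂ fun x y =>
    propext (sameComponent_iff_reflTransGen hb hw he (x := x) (y := y))]

theorem IsPairing.apply_mem (hf : IsPairing S f) {a : α} (ha : a ∈ S) : f a ∈ S :=
  (hf.2 (f a)).1 fun h => (hf.2 a).2 ha (by rwa [hf.1 a, eq_comm] at h)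

theorem IsPairing.apply_ne (hf : IsPairing S f) {a : α} (ha : a ∈ S) : f a ≠ a :=
  (hf.2 a).2 ha

theorem IsPairing.even_card_of_mapsTo (hf : IsPairing S f) {A : Finset α} (hA : A ⊆ S)
    (hmaps : Set.MapsTo f A A) : Even A.card := by
  have hsum : ∑ _x ∈ A, (1 : ZMod 2) = 0 :=
    Finset.sum_involution (fun a _ => f a) (fun _ _ => rfl)
      (fun a ha _ => hf.apply_ne (hA ha)) (fun _ ha => hmaps ha) (fun a _ => hf.1 a)
  rw [← ZMod.natCast_eq_zero_iff_even]
  simpa using hsum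

theorem mem_sdiff_pair {x : α} : x ∈ S \ {s, t} ↔ x ∈ S ∧ x ≠ s ∧ x ≠ t := by
  simp

theorem numEdges_eq_numEdges_sdiff_pair_add_one (hs : s ∈ S) (ht : t ∈ S) (hst : s ≠ t) :
    numEdges S = numEdges (S \ {s, t}) + 1 := by
  have hcard := Finset.card_sdiff_add_card_eq_card (s := {s, t}) (t := S) (by
    simp [Finset.insert_subset_iff, hs, ht])
  rw [Finset.card_pair hst] at hcard
  unfold numEdges
  omega

section RemoveP

variable (hf : Function.Involutive f) (hst : s ≠ t) (hfs : f s ≠ s) (hft : f t ≠ t)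
include hf hst hfs hft

theorem removeP_apply (x : α) :
    removeP f s t x =
      if x = s ∨ x = t then x else if f x = s then f t else if f x = t then f s else f x := by
  have hinv : ∀ y, f (f y) = y := hf
  simp only [removeP, Equiv.Perm.mul_apply, Equiv.swap_apply_def]
  split_ifs <;> grind

theorem removeP_involutive : Function.Involutive (removeP f s t) := by
  have hinv : ∀ y, f (f y) = y := hf
  intro x
  simp only [removeP_apply hf hst hfs hft]
  split_ifs <;> grind

theorem removeP_comm : removeP f t s = removeP f s t := by
  ext x
  rw [removeP_apply hf hst.symm hft hfs, removeP_apply hf hst hfs hft]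
  grind

end RemoveP

def pushOff (b : Perm α) (s t x : α) : α :=
  if x = s then b s else if x = t then b t else x

section Removal

variable (hs : s ∈ S) (ht : t ∈ S) (hst : s ≠ t)
include hs ht hst

theorem IsPairing.removeP_apply (hf : IsPairing S f) (x : α) :
    removeP f s t x =
      if x = s ∨ x = t then x else if f x = s then f t else if f x = t then f s else f x :=
  _root_.removeP_apply hf.1 hst (hf.apply_ne hs) (hf.apply_ne ht) x

theorem reflTransGen_of_reflTransGen_removeP {T : Set (Perm α)}
    (hT : ∀ g ∈ T, IsPairing S g) (he : e ∈ T) (hes : e s = t) {x y : α}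
    (h : ReflTransGen (Step ((removeP · s t) '' T)) x y) : ReflTransGen (Step T) x y := by
  refine reflTransGen_closed ?_ x y h
  rintro x _ ⟨_, ⟨g, hg, rfl⟩, rfl⟩
  have hstep : ∀ {u}, ReflTransGen (Step T) u (g u) := .single ⟨g, hg, rfl⟩
  have het : e t = s := by rw [← hes, (hT e he).1]
  rw [(hT g hg).removeP_apply hs ht hst]
  split_ifs with h₁ h₂ h₃
  · rfl
  · exact hstep.trans (h₂ ▸ (ReflTransGen.single ⟨e, he, hes⟩).trans hstep)
  · exact hstep.trans (h₃ ▸ (ReflTransGen.single ⟨e, he, het⟩).trans hstep)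
  · exact hstep

theorem reflTransGen_pushOff_apply {T : Set (Perm α)}
    (hT : ∀ g ∈ T, IsPairing S g) (hb : b ∈ T) (hbs : b s ≠ t)
    (hconn : ∀ g ∈ T, g s ≠ t →
      ReflTransGen (Step ((removeP · s t) '' T)) (b s) (g s) ∧
        ReflTransGen (Step ((removeP · s t) '' T)) (b t) (g t))
    {g : Perm α} (hg : g ∈ T) (u : α) :
    ReflTransGen (Step ((removeP · s t) '' T)) (pushOff b s t u) (pushOff b s t (g u)) := by
  set T' := (removeP · s t) '' T
  have hT' : Equivalence (ReflTransGen (Step T')) := equivalence_reflTransGen_step <| by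
    rintro _ ⟨g, hg, rfl⟩
    exact removeP_involutive (hT g hg).1 hst ((hT g hg).apply_ne hs) ((hT g hg).apply_ne ht)
  have hrem : ∀ g ∈ T, ∀ u, ReflTransGen (Step T') u (removeP g s t u) :=
    fun g hg u => .single ⟨_, Set.mem_image_of_mem _ hg, rfl⟩
  have hbst : ReflTransGen (Step T') (b s) (b t) := by
    simpa [(hT b hb).removeP_apply hs ht hst, (hT b hb).1, (hT b hb).apply_ne hs, hbs] using
      hrem b hb (b s)
  have hπ : ∀ {u}, u ≠ s → u ≠ t → pushOff b s t u = u := fun hus hut => by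
    simp [pushOff, hus, hut]
  have hπs : pushOff b s t s = b s := by simp [pushOff]
  have hπt : pushOff b s t t = b t := by simp [pushOff, hst.symm]
  have hpg := hT g hg
  have hgts : g s = t ↔ g t = s := ⟨fun h => by rw [← h, hpg.1], fun h => by rw [← h, hpg.1]⟩
  by_cases hus : u = s
  · subst hus
    by_cases hgs : g u = t
    · rw [hgs, hπs, hπt]; exact hbst
    · rw [hπs, hπ (hpg.apply_ne hs) hgs]; exact (hconn g hg hgs).1
  by_cases hut : u = t
  · subst hut
    by_cases hgt : g u = s
    · rw [hgt, hπs, hπt]; exact hT'.symm hbst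
    · rw [hπt, hπ hgt (hpg.apply_ne ht)]; exact (hconn g hg (mt hgts.1 hgt)).2
  rw [hπ hus hut]
  by_cases hgus : g u = s
  · have hgs : g s = u := by rw [← hgus, hpg.1]
    rw [hgus, hπs, ← hgs]; exact hT'.symm (hconn g hg (hgs ▸ hut)).1
  by_cases hgut : g u = t
  · have hgt : g t = u := by rw [← hgut, hpg.1]
    rw [hgut, hπt, ← hgt]; exact hT'.symm (hconn g hg (fun h => hus (hgt ▸ hgts.1 h))).2
  rw [hπ hgus hgut]
  simpa [hpg.removeP_apply hs ht hst, hus, hut, hgus, hgut] using hrem g hg u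

theorem reflTransGen_removeP_of_reflTransGen {T : Set (Perm α)}
    (hT : ∀ g ∈ T, IsPairing S g) (hb : b ∈ T) (hbs : b s ≠ t)
    (hconn : ∀ g ∈ T, g s ≠ t →
      ReflTransGen (Step ((removeP · s t) '' T)) (b s) (g s) ∧
        ReflTransGen (Step ((removeP · s t) '' T)) (b t) (g t))
    {x y : α} (hxs : x ≠ s) (hxt : x ≠ t) (hys : y ≠ s) (hyt : y ≠ t)
    (h : ReflTransGen (Step T) x y) : ReflTransGen (Step ((removeP · s t) '' T)) x y := by
  have hlift := ReflTransGen.lift' (pushOff b s t) (fun u _ ⟨g, hg, hgu⟩ =>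
    hgu ▸ reflTransGen_pushOff_apply hs ht hst hT hb hbs hconn hg u) x y h
  simpa [Function.onFun, pushOff, hxs, hxt, hys, hyt] using hlift

theorem reflTransGen_removeP_partners_left (hb : IsPairing S b) (hw : IsPairing S w)
    (hsep : ¬ ReflTransGen (Step {b, w}) s t) :
    ReflTransGen (Step {removeP b s t, removeP w s t}) (b s) (w s) := by
  set T' : Set (Perm α) := {removeP b s t, removeP w s t}
  set F := ReflTransGen (Step {b, w}) s
  have hstep : ∀ g ∈ ({b, w} : Set (Perm α)), IsPairing S g → ∀ x, F x → x ≠ s →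
      g x ≠ s → F (g x) ∧ Step T' x (g x) := by
    intro g hg hpg x hx hxs hgxs
    have hFgx : F (g x) := hx.tail ⟨g, hg, rfl⟩
    have hxt : x ≠ t := fun h => hsep (h ▸ hx)
    have hgxt : g x ≠ t := fun h => hsep (h ▸ hFgx)
    refine ⟨hFgx, removeP g s t, ?_, ?_⟩
    · rcases hg with rfl | rfl <;> simp [T']
    · simp [hpg.removeP_apply hs ht hst, hxs, hxt, hgxs, hgxt]
  by_contra hne
  set A := S.filter fun x => F x ∧ x ≠ s ∧ ReflTransGen (Step T') (b s) x
  have hbsA : b s ∈ A := Finset.mem_filter.2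
    ⟨hb.apply_mem hs, .single ⟨b, by simp, rfl⟩, hb.apply_ne hs, .refl⟩
  have hwA : Set.MapsTo w A A := by
    intro x hx
    obtain ⟨hxS, hFx, hxs, hreach⟩ := Finset.mem_filter.1 hx
    have hwxs : w x ≠ s := fun h => hne (by rwa [← hw.1 x, h] at hreach)
    obtain ⟨hF, hst'⟩ := hstep w (by simp) hw x hFx hxs hwxs
    exact Finset.mem_filter.2 ⟨hw.apply_mem hxS, hF, hwxs, hreach.tail hst'⟩
  have hbA : Set.MapsTo b (A.erase (b s)) (A.erase (b s)) := by
    intro x hx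
    obtain ⟨hxbs, hxA⟩ := Finset.mem_erase.1 hx
    obtain ⟨hxS, hFx, hxs, hreach⟩ := Finset.mem_filter.1 hxA
    have hbxs : b x ≠ s := fun h => hxbs (by rw [← h, hb.1])
    obtain ⟨hF, hst'⟩ := hstep b (by simp) hb x hFx hxs hbxs
    exact Finset.mem_erase.2 ⟨fun h => hxs (b.injective h),
      Finset.mem_filter.2 ⟨hb.apply_mem hxS, hF, hbxs, hreach.tail hst'⟩⟩
  have hAeven := hw.even_card_of_mapsTo (Finset.filter_subset _ _) hwA
  have hA'even := hb.even_card_of_mapsTo ((A.erase_subset _).trans (Finset.filter_subset _ _)) hbA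
  rw [← Finset.card_erase_add_one hbsA, Nat.even_add_one] at hAeven
  exact hAeven hA'even

theorem reflTransGen_removeP_partners (hb : IsPairing S b) (hw : IsPairing S w)
    (hsep : ¬ ReflTransGen (Step {b, w}) s t) :
    ReflTransGen (Step {removeP b s t, removeP w s t}) (b s) (w s) ∧
      ReflTransGen (Step {removeP b s t, removeP w s t}) (b t) (w t) := by
  refine ⟨reflTransGen_removeP_partners_left hs ht hst hb hw hsep, ?_⟩
  have hsep' : ¬ ReflTransGen (Step {b, w}) t s := fun h =>
    hsep ((equivalence_reflTransGen_step (by rintro g (rfl | rfl); exacts [hb.1, hw.1])).symm h)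
  simpa only [removeP_comm hb.1 hst (hb.apply_ne hs) (hb.apply_ne ht),
    removeP_comm hw.1 hst (hw.apply_ne hs) (hw.apply_ne ht)] using
    reflTransGen_removeP_partners_left ht hs hst.symm hb hw hsep'

theorem mergeRel_of_reflTransGen_removeP (hb : IsPairing S b) (hw : IsPairing S w) {x y : α}
    (h : ReflTransGen (Step ((removeP · s t) '' {b, w})) x y) :
    mergeRel (ReflTransGen (Step {b, w})) s t x y := by
  have hR := (equivalence_reflTransGen_step (T := {b, w}) (by
    rintro g (rfl | rfl); exacts [hb.1, hw.1])).mergeRel s t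
  induction h with
  | refl => exact hR.refl _
  | tail _ hlast ih =>
    refine hR.trans ih ?_
    obtain ⟨_, ⟨g, hg, rfl⟩, rfl⟩ := hlast
    have hpg : IsPairing S g := by rcases hg with rfl | rfl <;> assumption
    have hg' : ∀ u, ReflTransGen (Step {b, w}) u (g u) := fun u => .single ⟨g, hg, rfl⟩
    rw [hpg.removeP_apply hs ht hst]
    split_ifs with h₁ h₂ h₃
    · exact hR.refl _
    · exact Or.inr (Or.inl ⟨h₂ ▸ hg' _, hg' t⟩)
    · exact Or.inr (Or.inr ⟨h₃ ▸ hg' _, hg' s⟩)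
    · exact Or.inl (hg' _)

theorem reflTransGen_removeP_iff_mergeRel (hb : IsPairing S b) (hw : IsPairing S w)
    (hsep : ¬ ReflTransGen (Step {b, w}) s t) {x y : α}
    (hxs : x ≠ s) (hxt : x ≠ t) (hys : y ≠ s) (hyt : y ≠ t) :
    ReflTransGen (Step ((removeP · s t) '' {b, w})) x y ↔
      mergeRel (ReflTransGen (Step {b, w})) s t x y := by
  set R := ReflTransGen (Step {b, w})
  set T' := (removeP · s t) '' {b, w}
  have hT : ∀ g ∈ ({b, w} : Set (Perm α)), IsPairing S g := by simp [hb, hw]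
  have hR : Equivalence R := equivalence_reflTransGen_step fun g hg => (hT g hg).1
  have hsbs : R s (b s) := .single ⟨b, by simp, rfl⟩
  have htbt : R t (b t) := .single ⟨b, by simp, rfl⟩
  have hbs : b s ≠ t := fun h => hsep (h ▸ hsbs)
  have hbt : b t ≠ s := fun h => hbs (by rw [← h, hb.1])
  have hpartners := reflTransGen_removeP_partners hs ht hst hb hw hsep
  rw [← Set.image_pair (removeP · s t)] at hpartners
  have hback : ∀ {x y}, x ≠ s → x ≠ t → y ≠ s → y ≠ t → R x y → ReflTransGen (Step T') x y :=
    reflTransGen_removeP_of_reflTransGen hs ht hst hT (by simp) hbs <| by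
      rintro g (rfl | rfl) -
      exacts [⟨.refl, .refl⟩, hpartners]
  have hbst : ReflTransGen (Step T') (b s) (b t) := .single ⟨removeP b s t, by simp [T'], by
    simp [hb.removeP_apply hs ht hst, hb.1, hb.apply_ne hs, hbs]⟩
  have hbts : ReflTransGen (Step T') (b t) (b s) := .single ⟨removeP b s t, by simp [T'], by
    simp [hb.removeP_apply hs ht hst, hb.1, hb.apply_ne ht, hbt, hst.symm]⟩
  refine ⟨mergeRel_of_reflTransGen_removeP hs ht hst hb hw, ?_⟩
  rintro (h | ⟨hxs', hty⟩ | ⟨hxt', hsy⟩)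
  · exact hback hxs hxt hys hyt h
  · exact (hback hxs hxt (hb.apply_ne hs) hbs (hR.trans hxs' hsbs)).trans
      (hbst.trans (hback hbt (hb.apply_ne ht) hys hyt (hR.trans (hR.symm htbt) hty)))
  · exact (hback hxs hxt hbt (hb.apply_ne ht) (hR.trans hxt' htbt)).trans
      (hbts.trans (hback (hb.apply_ne hs) hbs hys hyt (hR.trans (hR.symm hsbs) hsy)))

end Removal

theorem numClasses_removeP {T : Set (Perm α)} (hT : ∀ g ∈ T, IsPairing S g) (hs : s ∈ S)
    (hb : b ∈ T) (he : e ∈ T) (hes : e s = t) (hbs : b s ≠ t)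
    (hconn : ∀ g ∈ T, g s ≠ t →
      ReflTransGen (Step ((removeP · s t) '' T)) (b s) (g s) ∧
        ReflTransGen (Step ((removeP · s t) '' T)) (b t) (g t)) :
    numClasses (S \ {s, t}) (ReflTransGen (Step ((removeP · s t) '' T))) =
      numClasses S (ReflTransGen (Step T)) := by
  have ht : t ∈ S := hes ▸ (hT e he).apply_mem hs
  have hst : s ≠ t := hes ▸ ((hT e he).apply_ne hs).symm
  have hR := equivalence_reflTransGen_step fun g hg => (hT g hg).1
  rw [numClasses_congr fun x hx y hy => by
    obtain ⟨-, hxs, hxt⟩ := mem_sdiff_pair.1 hx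
    obtain ⟨-, hys, hyt⟩ := mem_sdiff_pair.1 hy
    exact ⟨reflTransGen_of_reflTransGen_removeP hs ht hst hT he hes,
      reflTransGen_removeP_of_reflTransGen hs ht hst hT hb hbs hconn hxs hxt hys hyt⟩]
  refine numClasses_sdiff hR fun x hx => ⟨b s, ?_, ?_⟩
  · exact mem_sdiff_pair.2 ⟨(hT b hb).apply_mem hs, (hT b hb).apply_ne hs, hbs⟩
  · have hsbs : ReflTransGen (Step T) s (b s) := .single ⟨b, hb, rfl⟩
    rcases (by simpa using (Finset.mem_inter.1 hx).2 : x = s ∨ x = t) with rfl | rfl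
    · exact hsbs
    · exact hsbs.head ⟨e, he, by rw [← hes, (hT e he).1]⟩

theorem numFaces_removeP_of_apply_ne (hf : IsPairing S f) (he : IsPairing S e) (hs : s ∈ S)
    (hes : e s = t) (hfs : f s ≠ t) :
    numFaces (S \ {s, t}) (removeP f s t) (removeP e s t) = numFaces S f e := by
  have ht : t ∈ S := hes ▸ he.apply_mem hs
  have hst : s ≠ t := hes ▸ (he.apply_ne hs).symm
  rw [numFaces_eq_numClasses (removeP_involutive hf.1 hst (hf.apply_ne hs) (hf.apply_ne ht))
      (removeP_involutive he.1 hst (he.apply_ne hs) (he.apply_ne ht)),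
    numFaces_eq_numClasses hf.1 he.1, ← Set.image_pair (removeP · s t)]
  refine numClasses_removeP (by simp [hf, he]) hs (by simp) (by simp) hes hfs ?_
  rintro g (rfl | rfl) hgs
  exacts [⟨.refl, .refl⟩, absurd hes hgs]

theorem numComponents_removeP (hb : IsPairing S b) (hw : IsPairing S w) (he : IsPairing S e)
    (hs : s ∈ S) (hes : e s = t) (hint : ¬ SameFace b w s t) :
    numComponents (S \ {s, t}) (removeP b s t) (removeP w s t) (removeP e s t) =
      numComponents S b w e := by
  have ht : t ∈ S := hes ▸ he.apply_mem hs
  have hst : s ≠ t := hes ▸ (he.apply_ne hs).symm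
  have hsep : ¬ ReflTransGen (Step {b, w}) s t := mt (sameFace_iff_reflTransGen hb.1 hw.1).2 hint
  have himage : (removeP · s t) '' {b, w, e} = {removeP b s t, removeP w s t, removeP e s t} := by
    simp only [Set.image_insert_eq, Set.image_singleton]
  rw [numComponents_eq_numClasses hb.1 hw.1 he.1, numComponents_eq_numClasses
      (removeP_involutive hb.1 hst (hb.apply_ne hs) (hb.apply_ne ht))
      (removeP_involutive hw.1 hst (hw.apply_ne hs) (hw.apply_ne ht))
      (removeP_involutive he.1 hst (he.apply_ne hs) (he.apply_ne ht)), ← himage]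
  have hsub : ({removeP b s t, removeP w s t} : Set (Perm α)) ⊆ (removeP · s t) '' {b, w, e} := by
    rw [himage]; rintro g (rfl | rfl) <;> simp
  have hmono := ReflTransGen.mono (Step.mono hsub)
  have hpartners := reflTransGen_removeP_partners hs ht hst hb hw hsep
  refine numClasses_removeP (by simp [hb, hw, he]) hs (by simp) (by simp) hes
    (fun h => hsep (h ▸ .single ⟨b, by simp, rfl⟩)) ?_
  rintro g (rfl | rfl | rfl) hgs
  exacts [⟨.refl, .refl⟩, ⟨hmono _ _ hpartners.1, hmono _ _ hpartners.2⟩, absurd hes hgs]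

theorem numFaces_eq_numFaces_removeP_add_one (hb : IsPairing S b) (hw : IsPairing S w)
    (hs : s ∈ S) (ht : t ∈ S) (hst : s ≠ t) (hint : ¬ SameFace b w s t) :
    numFaces S b w = numFaces (S \ {s, t}) (removeP b s t) (removeP w s t) + 1 := by
  set R := ReflTransGen (Step {b, w})
  have hR : Equivalence R := equivalence_reflTransGen_step (by
    rintro g (rfl | rfl); exacts [hb.1, hw.1])
  have hsep : ¬ R s t := mt (sameFace_iff_reflTransGen hb.1 hw.1).2 hint
  have hsbs : R s (b s) := .single ⟨b, by simp, rfl⟩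
  have hbs : b s ≠ t := fun h => hsep (h ▸ hsbs)
  rw [numFaces_eq_numClasses hb.1 hw.1, numFaces_eq_numClasses
      (removeP_involutive hb.1 hst (hb.apply_ne hs) (hb.apply_ne ht))
      (removeP_involutive hw.1 hst (hw.apply_ne hs) (hw.apply_ne ht)),
    ← Set.image_pair (removeP · s t), ← numClasses_mergeRel_add_one hR hs ht hsep,
    numClasses_congr (S := S \ {s, t}) fun x hx y hy => by
      obtain ⟨-, hxs, hxt⟩ := mem_sdiff_pair.1 hx
      obtain ⟨-, hys, hyt⟩ := mem_sdiff_pair.1 hy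
      exact reflTransGen_removeP_iff_mergeRel hs ht hst hb hw hsep hxs hxt hys hyt]
  congr 1
  refine (numClasses_sdiff (hR.mergeRel s t) fun x hx => ⟨b s, ?_, ?_⟩).symm
  · exact mem_sdiff_pair.2 ⟨hb.apply_mem hs, hb.apply_ne hs, hbs⟩
  · rcases (by simpa using (Finset.mem_inter.1 hx).2 : x = s ∨ x = t) with rfl | rfl
    · exact Or.inl hsbs
    · exact Or.inr (Or.inr ⟨hR.refl x, hsbs⟩)

/-- if `E₀ = {s, e s}` is an interface edge of the map
`M = (S,b,w,e)`, then no extremity of `E₀` is a leaf, and `M \ E₀` has the same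
numbers of vertices and connected components as `M`, one fewer face, and one fewer
edge; consequently `d(M \ E₀) = d(M)`. -/
theorem remove_interface_edge (S : Finset α) (b w e : Equiv.Perm α)
    (hb : IsPairing S b) (hw : IsPairing S w) (he : IsPairing S e)
    (s : α) (hs : s ∈ S)
    (hinterface : IsInterface b w s (e s)) :
    (b s ≠ e s ∧ w s ≠ e s) ∧
    numVertices (S \ {s, e s}) (removeP b s (e s)) (removeP w s (e s))
        (removeP e s (e s)) = numVertices S b w e ∧
    numComponents (S \ {s, e s}) (removeP b s (e s)) (removeP w s (e s))
        (removeP e s (e s)) = numComponents S b w e ∧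
    numFaces S b w
      = numFaces (S \ {s, e s}) (removeP b s (e s)) (removeP w s (e s)) + 1 ∧
    numEdges S = numEdges (S \ {s, e s}) + 1 ∧
    dInv (S \ {s, e s}) (removeP b s (e s)) (removeP w s (e s)) (removeP e s (e s))
      = dInv S b w e := by
  have hint : ¬ SameFace b w s (e s) := hinterface
  have hleaf : b s ≠ e s ∧ w s ≠ e s := by
    constructor <;> intro h <;> refine hint ((sameFace_iff_reflTransGen hb.1 hw.1).2 (h ▸ .single ?_))
    exacts [⟨b, by simp, rfl⟩, ⟨w, by simp, rfl⟩]
  have hV : numVertices (S \ {s, e s}) (removeP b s (e s)) (removeP w s (e s))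
      (removeP e s (e s)) = numVertices S b w e := by
    rw [numVertices, numVertices, numFaces_removeP_of_apply_ne hb he hs rfl hleaf.1,
      numFaces_removeP_of_apply_ne hw he hs rfl hleaf.2]
  have hC := numComponents_removeP hb hw he hs rfl hint
  have hF := numFaces_eq_numFaces_removeP_add_one hb hw hs (he.apply_mem hs)
    (he.apply_ne hs).symm hint
  have hE := numEdges_eq_numEdges_sdiff_pair_add_one hs (he.apply_mem hs) (he.apply_ne hs).symm
  refine ⟨hleaf, hV, hC, hF, hE, ?_⟩
  rw [dInv, dInv, eulerChar, eulerChar, hV, hC, hF, hE]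
  push_cast
  ring

end
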